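/- arXiv:1303.3381 — 5 statements merged into one kernel-verified Lean document; each statement's English description precedes it below -/
import Mathlib

section
/- Let f be the probability mass function of a sum of m independent Bernoulli random variables with parameters p_1,...,p_m (so f_k = P(B_1+...+B_m = k), with f_k = 0 for k < 0 or k > m). Then for every integer k and every integer q ≥ 1: q·f_k·f_{k-q} = Σ_{j=1}^m p_j(1-p_j)·[f^{(j)}_{k-1}·f^{(j)}_{k-q} − f^{(j)}_k·f^{(j)}_{k-q-1}], where f^{(j)} is the mass function of the sum leaving out the j-th Bernoulli variable. -/
open Finset

/-!
Splitting off the `j`-th variable gives `f t = p j f⁽ʲ⁾(t - 1) + (1 - p j) f⁽ʲ⁾(t)`;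
applied to the variable added in an induction on the index set, it also gives
`∑ⱼ p j f⁽ʲ⁾(t - 1) = t f t`. Expanding `f k` and `f (k - q)` in the `j`-th summand by the
first identity, the `(p j)²` terms cancel and the summand becomes
`p j f⁽ʲ⁾(k - 1) f (k - q) - p j f⁽ʲ⁾(k - q - 1) f k`; summing over `j` with the second
identity leaves `k f k f (k - q) - (k - q) f (k - q) f k = q f k f (k - q)`.
-/

/-- Probability mass function of a sum of independent Bernoulli random variables
indexed by the finite set `I`, with parameters `p i`. -/
def bernoulliSumPMF (I : Finset ℕ) (p : ℕ → ℝ) (k : ℤ) : ℝ :=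
  if 0 ≤ k then
    ∑ S ∈ I.powersetCard k.toNat, (∏ i ∈ S, p i) * (∏ i ∈ I \ S, (1 - p i))
  else 0

theorem Finset.sum_powersetCard_succ_insert {α β : Type*} [DecidableEq α] [AddCommMonoid β]
    {s : Finset α} {a : α} (ha : a ∉ s) (n : ℕ) (f : Finset α → β) :
    ∑ t ∈ powersetCard (n + 1) (insert a s), f t =
      ∑ t ∈ powersetCard (n + 1) s, f t + ∑ t ∈ powersetCard n s, f (insert a t) := by
  rw [powersetCard_succ_insert ha, sum_union, sum_image]
  · exact insert_erase_invOn.2.injOn.mono fun t ht ↦ notMem_mono (mem_powersetCard.1 ht).1 ha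
  · aesop (add simp [disjoint_left, mem_powersetCard, insert_subset_iff])

section

variable (p : ℕ → ℝ)

def bernoulliWeight (I S : Finset ℕ) : ℝ :=
  (∏ i ∈ S, p i) * ∏ i ∈ I \ S, (1 - p i)

variable {p} {I S : Finset ℕ} {a : ℕ}

lemma bernoulliWeight_insert_of_notMem (haI : a ∉ I) (haS : a ∉ S) :
    bernoulliWeight p (insert a I) S = (1 - p a) * bernoulliWeight p I S := by
  rw [bernoulliWeight, bernoulliWeight, insert_sdiff_of_notMem I haS,
    prod_insert (notMem_sdiff_of_notMem_left haI)]
  ring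

lemma bernoulliWeight_insert_insert (haI : a ∉ I) (haS : a ∉ S) :
    bernoulliWeight p (insert a I) (insert a S) = p a * bernoulliWeight p I S := by
  rw [bernoulliWeight, bernoulliWeight, insert_sdiff_insert, sdiff_insert_of_notMem haI,
    prod_insert haS]
  ring

variable (p I)

lemma bernoulliSumPMF_of_neg {k : ℤ} (hk : k < 0) : bernoulliSumPMF I p k = 0 :=
  if_neg hk.not_ge

lemma bernoulliSumPMF_zero : bernoulliSumPMF I p 0 = ∏ i ∈ I, (1 - p i) := by
  simp [bernoulliSumPMF]

lemma bernoulliSumPMF_natCast (n : ℕ) :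
    bernoulliSumPMF I p n = ∑ S ∈ I.powersetCard n, bernoulliWeight p I S := by
  simp [bernoulliSumPMF, bernoulliWeight]

lemma bernoulliSumPMF_insert (haI : a ∉ I) (k : ℤ) :
    bernoulliSumPMF (insert a I) p k =
      p a * bernoulliSumPMF I p (k - 1) + (1 - p a) * bernoulliSumPMF I p k := by
  rcases lt_or_ge k 0 with hk | hk
  · simp [bernoulliSumPMF_of_neg, hk, (sub_one_lt k).trans hk]
  obtain ⟨_ | n, rfl⟩ := Int.eq_ofNat_of_zero_le hk
  · simp [bernoulliSumPMF_zero, bernoulliSumPMF_of_neg, prod_insert haI]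
  have haS : ∀ {n}, ∀ S ∈ I.powersetCard n, a ∉ S :=
    fun S hS haS ↦ haI ((mem_powersetCard.1 hS).1 haS)
  rw [show ((n + 1 : ℕ) : ℤ) - 1 = n by push_cast; ring]
  simp only [bernoulliSumPMF_natCast, sum_powersetCard_succ_insert haI, mul_sum]
  rw [add_comm, sum_congr rfl fun S hS ↦ bernoulliWeight_insert_of_notMem haI (haS S hS),
    sum_congr rfl fun S hS ↦ bernoulliWeight_insert_insert haI (haS S hS)]

lemma bernoulliSumPMF_eq_erase {j : ℕ} (hj : j ∈ I) (k : ℤ) :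
    bernoulliSumPMF I p k =
      p j * bernoulliSumPMF (I.erase j) p (k - 1) +
        (1 - p j) * bernoulliSumPMF (I.erase j) p k := by
  conv_lhs => rw [← insert_erase hj]
  exact bernoulliSumPMF_insert p _ (notMem_erase j I) k

lemma sum_mul_bernoulliSumPMF_erase (k : ℤ) :
    ∑ j ∈ I, p j * bernoulliSumPMF (I.erase j) p (k - 1) = k * bernoulliSumPMF I p k := by
  induction I using Finset.induction_on generalizing k with
  | empty =>
    rcases lt_trichotomy k 0 with hk | rfl | hk
    · simp [bernoulliSumPMF_of_neg p _ hk]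
    · simp
    · have : (∅ : Finset ℕ).powersetCard k.toNat = ∅ := powersetCard_eq_empty.2 (by simpa)
      simp [bernoulliSumPMF, this]
  | insert a I haI ih =>
    have hsplit : ∑ j ∈ I, p j * bernoulliSumPMF ((insert a I).erase j) p (k - 1) =
        p a * ∑ j ∈ I, p j * bernoulliSumPMF (I.erase j) p (k - 1 - 1) +
          (1 - p a) * ∑ j ∈ I, p j * bernoulliSumPMF (I.erase j) p (k - 1) := by
      rw [mul_sum, mul_sum, ← sum_add_distrib]
      refine sum_congr rfl fun j hj ↦ ?_
      rw [erase_insert_of_ne (ne_of_mem_of_not_mem hj haI).symm,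
        bernoulliSumPMF_insert p _ (fun h ↦ haI (mem_of_mem_erase h))]
      ring
    rw [sum_insert haI, erase_insert haI, hsplit, ih, ih, bernoulliSumPMF_insert p _ haI]
    push_cast
    ring

end

theorem bernoulli_sum_identity_general (m : ℕ) (p : ℕ → ℝ)
    (f : ℤ → ℝ) (hf : ∀ k, f k = bernoulliSumPMF (Finset.range m) p k)
    (f' : ℕ → ℤ → ℝ)
    (hf' : ∀ j ∈ Finset.range m, ∀ k, f' j k = bernoulliSumPMF (Finset.range m \ {j}) p k)
    (k q : ℤ) :
    (q : ℝ) * f k * f (k - q) =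
      ∑ j ∈ Finset.range m,
        p j * (1 - p j) * (f' j (k - 1) * f' j (k - q) - f' j k * f' j (k - q - 1)) := by
  have hsplit : ∀ j ∈ range m, ∀ t, f t = p j * f' j (t - 1) + (1 - p j) * f' j t := by
    intro j hj t
    rw [hf, hf' j hj, hf' j hj, ← erase_eq]
    exact bernoulliSumPMF_eq_erase p _ hj t
  have hcount : ∀ t, ∑ j ∈ range m, p j * f' j (t - 1) = t * f t := by
    intro t
    rw [hf, ← sum_mul_bernoulliSumPMF_erase]
    exact sum_congr rfl fun j hj ↦ by rw [hf' j hj, erase_eq]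
  calc (q : ℝ) * f k * f (k - q)
        = k * f k * f (k - q) - ((k - q : ℤ) : ℝ) * f (k - q) * f k := by push_cast; ring
    _ = ∑ j ∈ range m, (p j * f' j (k - 1) * f (k - q) - p j * f' j (k - q - 1) * f k) := by
        rw [sum_sub_distrib, ← sum_mul, ← sum_mul, hcount, hcount]
    _ = _ := sum_congr rfl fun j hj ↦ by rw [hsplit j hj k, hsplit j hj (k - q)]; ring

theorem bernoulli_sum_identity (m : ℕ) (p : ℕ → ℝ)
    (hp : ∀ i ∈ Finset.range m, 0 ≤ p i ∧ p i ≤ 1)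
    (f : ℤ → ℝ) (hf : ∀ k, f k = bernoulliSumPMF (Finset.range m) p k)
    (f' : ℕ → ℤ → ℝ)
    (hf' : ∀ j ∈ Finset.range m, ∀ k, f' j k = bernoulliSumPMF (Finset.range m \ {j}) p k)
    (k q : ℤ) (hq : 1 ≤ q) :
    (q : ℝ) * f k * f (k - q) =
      ∑ j ∈ Finset.range m,
        p j * (1 - p j) * (f' j (k - 1) * f' j (k - q) - f' j k * f' j (k - q - 1)) :=
  bernoulli_sum_identity_general m p f hf f' hf' k q
end

section
/- Let g be the probability mass function of a sum of m independent Bernoulli random variables. Then for every integer k: g_{k-1}·g_k² − 2·g_{k-1}²·g_{k+1} + g_{k-2}·g_k·g_{k+1} ≥ 0. -/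
/-!
Adding an independent Bernoulli(q) variable turns the law `h` of a sum into
`k ↦ (1 - q) h k + q h (k - 1)`. By induction on the number of summands, the law stays PF₂
(nonnegative with `h c h d ≤ h a h b` whenever `a + b = c + d` and `c ≤ a, b`; this forbids
internal zeros) and satisfies the cubic inequality. In the cubic step, away from the boundary of
the support, `x1⁴ x2⁴ x3³ x4` times the new cubic expression is a polynomial with nonnegative
coefficients in `q`, `1 - q`, the old values `xᵢ = h (k - 3 + i)`, and the old log-concavity and
cubic quantities; at the boundary, shorter identities of the same kind do the job.
-/

open Finset

def bernoulliMix (q : ℝ) (h : ℤ → ℝ) (k : ℤ) : ℝ := (1 - q) * h k + q * h (k - 1)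

theorem bernoulliSumPMF_empty (p : ℕ → ℝ) (k : ℤ) :
    bernoulliSumPMF ∅ p k = if k = 0 then 1 else 0 := by
  unfold bernoulliSumPMF
  split_ifs with hk hk0 hk0
  · simp [hk0]
  · rw [powersetCard_eq_empty.2 (by simp only [card_empty]; omega), sum_empty]
  · omega
  · rfl

theorem bernoulliSumPMF_insert_s2 {I : Finset ℕ} {j : ℕ} (hj : j ∉ I) (p : ℕ → ℝ) :
    bernoulliSumPMF (insert j I) p = bernoulliMix (p j) (bernoulliSumPMF I p) := by
  have hjS : ∀ {n S}, S ∈ I.powersetCard n → j ∉ S := fun hS h =>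
    hj ((mem_powersetCard.1 hS).1 h)
  funext k
  obtain hk | rfl | ⟨n, rfl⟩ : k < 0 ∨ k = 0 ∨ ∃ n : ℕ, k = n + 1 := by
    rcases lt_trichotomy k 0 with h | h | h
    · exact .inl h
    · exact .inr (.inl h)
    · exact .inr (.inr ⟨(k - 1).toNat, by omega⟩)
  · simp only [bernoulliSumPMF, bernoulliMix]
    rw [if_neg (by omega), if_neg (by omega), if_neg (by omega)]
    ring
  · simp [bernoulliSumPMF, bernoulliMix, prod_insert hj]
  · simp only [bernoulliSumPMF, bernoulliMix, add_sub_cancel_right, Int.toNat_natCast_add_one,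
      Int.toNat_natCast]
    rw [if_pos (by omega), if_pos (by omega), if_pos (by omega), powersetCard_succ_insert hj,
      sum_union, sum_image, mul_sum, mul_sum]
    · congr 1 <;> refine sum_congr rfl fun S hS => ?_
      · rw [insert_sdiff_of_notMem _ (hjS hS), prod_insert (by simp [hj])]
        ring
      · rw [insert_sdiff_insert, sdiff_insert_of_notMem hj, prod_insert (hjS hS)]
        ring
    · intro S hS T hT hST
      rw [← erase_insert (hjS hS), ← erase_insert (hjS hT), hST]
    · refine disjoint_left.2 fun S hS hS' => ?_
      obtain ⟨T, -, rfl⟩ := mem_image.1 hS'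
      exact hjS hS (mem_insert_self j T)

structure IsPF2 (h : ℤ → ℝ) : Prop where
  nonneg : ∀ k, 0 ≤ h k
  mul_le_mul_of_add_eq : ∀ {a b c d : ℤ}, a + b = c + d → c ≤ a → c ≤ b →
    h c * h d ≤ h a * h b

namespace IsPF2

variable {h : ℤ → ℝ}

theorem pos_of_le_of_le (hh : IsPF2 h) {a b c : ℤ} (hab : a ≤ b) (hbc : b ≤ c)
    (ha : 0 < h a) (hc : 0 < h c) : 0 < h b := by
  have key := hh.mul_le_mul_of_add_eq (a := b) (b := a + c - b) (c := a) (d := c)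
    (by ring) hab (by omega)
  exact (hh.nonneg b).lt_of_ne fun hb => by
    rw [← hb, zero_mul] at key
    exact (mul_pos ha hc).not_ge key

theorem mul_le_sq (hh : IsPF2 h) (k : ℤ) : h (k - 1) * h (k + 1) ≤ h k ^ 2 :=
  sq (h k) ▸ hh.mul_le_mul_of_add_eq (by ring) (by omega) (by omega)

theorem bernoulliMix (hh : IsPF2 h) {q : ℝ} (hq0 : 0 ≤ q) (hq1 : q ≤ 1) :
    IsPF2 (bernoulliMix q h) where
  nonneg k := by
    have := hh.nonneg k
    have := hh.nonneg (k - 1)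
    unfold _root_.bernoulliMix
    nlinarith
  mul_le_mul_of_add_eq {a b c d} hsum hca hcb := by
    unfold _root_.bernoulliMix
    obtain rfl | hca := hca.eq_or_lt
    · obtain rfl : d = b := by omega
      rfl
    obtain rfl | hcb := hcb.eq_or_lt
    · obtain rfl : d = a := by omega
      exact (mul_comm _ _).le
    have h₀ := hh.mul_le_mul_of_add_eq hsum hca.le hcb.le
    have h₁ := hh.mul_le_mul_of_add_eq (a := a - 1) (b := b - 1) (c := c - 1) (d := d - 1)
      (by omega) (by omega) (by omega)
    have h₂ := hh.mul_le_mul_of_add_eq (a := a - 1) (b := b) (c := c - 1) (d := d)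
      (by omega) (by omega) (by omega)
    have h₃ := hh.mul_le_mul_of_add_eq (a := a) (b := b - 1) (c := c) (d := d - 1)
      (by omega) (by omega) (by omega)
    have hr : 0 ≤ 1 - q := by linarith
    linear_combination (1 - q) ^ 2 * h₀ + q ^ 2 * h₁ + q * (1 - q) * (h₂ + h₃)

end IsPF2

theorem isPF2_indicator_zero : IsPF2 fun k => if k = 0 then 1 else 0 where
  nonneg k := by split_ifs <;> norm_num
  mul_le_mul_of_add_eq {a b c d} hsum hca hcb := by
    split_ifs <;> first | omega | norm_num

def cubicC1 (g : ℤ → ℝ) (k : ℤ) : ℝ :=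
  g (k - 1) * g k ^ 2 - 2 * g (k - 1) ^ 2 * g (k + 1) + g (k - 2) * g k * g (k + 1)

theorem cubicC1_nonneg_of_eq_zero {g : ℤ → ℝ} (hg : ∀ k, 0 ≤ g k) {k : ℤ}
    (hk : g (k - 1) = 0 ∨ g (k + 1) = 0) : 0 ≤ cubicC1 g k := by
  rcases hk with hk | hk
  · have e : cubicC1 g k = g (k - 2) * g k * g (k + 1) := by rw [cubicC1, hk]; ring
    exact e ▸ mul_nonneg (mul_nonneg (hg _) (hg _)) (hg _)
  · have e : cubicC1 g k = g (k - 1) * g k ^ 2 := by rw [cubicC1, hk]; ring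
    exact e ▸ mul_nonneg (hg _) (sq_nonneg _)

def cubicC1Mix (q x0 x1 x2 x3 x4 : ℝ) : ℝ :=
  ((1 - q) * x2 + q * x1) * ((1 - q) * x3 + q * x2) ^ 2
    - 2 * ((1 - q) * x2 + q * x1) ^ 2 * ((1 - q) * x4 + q * x3)
    + ((1 - q) * x1 + q * x0) * ((1 - q) * x3 + q * x2) * ((1 - q) * x4 + q * x3)

theorem cubicC1_bernoulliMix (q : ℝ) (h : ℤ → ℝ) (k : ℤ) :
    cubicC1 (bernoulliMix q h) k =
      cubicC1Mix q (h (k - 3)) (h (k - 2)) (h (k - 1)) (h k) (h (k + 1)) := by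
  simp only [cubicC1, bernoulliMix, cubicC1Mix, sub_sub, add_sub_cancel_right]
  norm_num

-- `x1⁴ x2⁴ x3³ x4 * cubicC1Mix q x0 x1 x2 x3 x4` equals this polynomial at `r = 1 - q`,
-- `U = x1² - x0 x2`, and `V1`, `V2` the cubic expressions of `(x0, …, x3)` and `(x1, …, x4)`.
def cubicCertificate (q r x0 x1 x2 x3 x4 U V1 V2 : ℝ) : ℝ :=
  r ^ 3 * V2 * x1 ^ 4 * x2 ^ 4 * x3 ^ 3 * x4
  + q ^ 2 * r * V1 ^ 2 * V2 * x1 ^ 2 * x2 ^ 2 * x3 * x4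
  + 2 * q ^ 2 * r * V1 ^ 3 * x1 * x2 ^ 2 * x3 * x4 ^ 2
  + 2 * q * r ^ 2 * U * V2 * x1 ^ 3 * x2 ^ 3 * x3 ^ 3 * x4
  + q * r ^ 2 * U * V1 * x1 ^ 2 * x2 ^ 3 * x3 ^ 3 * x4 ^ 2
  + 3 * q ^ 2 * r * U * V1 * V2 * x1 ^ 2 * x2 ^ 2 * x3 ^ 2 * x4
  + 9 * q ^ 2 * r * U * V1 ^ 2 * x1 * x2 ^ 2 * x3 ^ 2 * x4 ^ 2
  + q ^ 3 * U * V1 ^ 2 * V2 * x1 * x2 * x3 * x4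
  + 2 * q ^ 3 * U * V1 ^ 3 * x2 * x3 * x4 ^ 2
  + 2 * q ^ 2 * r * U ^ 2 * V2 * x1 ^ 2 * x2 ^ 2 * x3 ^ 3 * x4
  + 11 * q ^ 2 * r * U ^ 2 * V1 * x1 * x2 ^ 2 * x3 ^ 3 * x4 ^ 2
  + 2 * q ^ 3 * U ^ 2 * V1 * V2 * x1 * x2 * x3 ^ 2 * x4
  + 7 * q ^ 3 * U ^ 2 * V1 ^ 2 * x2 * x3 ^ 2 * x4 ^ 2
  + 2 * q ^ 2 * r * U ^ 3 * x1 * x2 ^ 2 * x3 ^ 4 * x4 ^ 2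
  + 6 * q ^ 3 * U ^ 3 * V1 * x2 * x3 ^ 3 * x4 ^ 2
  + 2 * q * r ^ 2 * x0 * V2 * x1 ^ 3 * x2 ^ 4 * x3 ^ 3 * x4
  + q * r ^ 2 * x0 * V1 * x1 ^ 2 * x2 ^ 4 * x3 ^ 3 * x4 ^ 2
  + q ^ 2 * r * x0 * V1 * V2 * x1 ^ 2 * x2 ^ 3 * x3 ^ 2 * x4
  + 3 * q ^ 2 * r * x0 * V1 ^ 2 * x1 * x2 ^ 3 * x3 ^ 2 * x4 ^ 2
  + q ^ 3 * x0 * V1 ^ 2 * V2 * x1 * x2 ^ 2 * x3 * x4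
  + 2 * q ^ 3 * x0 * V1 ^ 3 * x2 ^ 2 * x3 * x4 ^ 2
  + 2 * q ^ 2 * r * x0 * U * V2 * x1 ^ 2 * x2 ^ 3 * x3 ^ 3 * x4
  + 7 * q ^ 2 * r * x0 * U * V1 * x1 * x2 ^ 3 * x3 ^ 3 * x4 ^ 2
  + 3 * q ^ 3 * x0 * U * V1 * V2 * x1 * x2 ^ 2 * x3 ^ 2 * x4
  + 10 * q ^ 3 * x0 * U * V1 ^ 2 * x2 ^ 2 * x3 ^ 2 * x4 ^ 2
  + 11 * q ^ 3 * x0 * U ^ 2 * V1 * x2 ^ 2 * x3 ^ 3 * x4 ^ 2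
  + q ^ 2 * r * x0 ^ 2 * V2 * x1 ^ 2 * x2 ^ 4 * x3 ^ 3 * x4
  + 2 * q ^ 2 * r * x0 ^ 2 * V1 * x1 * x2 ^ 4 * x3 ^ 3 * x4 ^ 2
  + q ^ 3 * x0 ^ 2 * V1 * V2 * x1 * x2 ^ 3 * x3 ^ 2 * x4
  + 3 * q ^ 3 * x0 ^ 2 * V1 ^ 2 * x2 ^ 3 * x3 ^ 2 * x4 ^ 2
  + 6 * q ^ 3 * x0 ^ 2 * U * V1 * x2 ^ 3 * x3 ^ 3 * x4 ^ 2
  + q ^ 3 * x0 ^ 3 * V1 * x2 ^ 4 * x3 ^ 3 * x4 ^ 2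

theorem cubicCertificate_nonneg {q r x0 x1 x2 x3 x4 U V1 V2 : ℝ}
    (hq : 0 ≤ q) (hr : 0 ≤ r) (h0 : 0 ≤ x0) (h1 : 0 ≤ x1) (h2 : 0 ≤ x2)
    (h3 : 0 ≤ x3) (h4 : 0 ≤ x4) (hU : 0 ≤ U) (hV1 : 0 ≤ V1) (hV2 : 0 ≤ V2) :
    0 ≤ cubicCertificate q r x0 x1 x2 x3 x4 U V1 V2 := by
  unfold cubicCertificate
  positivity

section cubicC1Mix

variable {q x0 x1 x2 x3 x4 : ℝ}

theorem cubicC1Mix_nonneg_of_pos (hq0 : 0 ≤ q) (hq1 : q ≤ 1) (h0 : 0 ≤ x0) (h1 : 0 < x1)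
    (h2 : 0 < x2) (h3 : 0 < x3) (h4 : 0 < x4) (hU : x0 * x2 ≤ x1 ^ 2)
    (hV1 : 0 ≤ x1 * x2 ^ 2 - 2 * x1 ^ 2 * x3 + x0 * x2 * x3)
    (hV2 : 0 ≤ x2 * x3 ^ 2 - 2 * x2 ^ 2 * x4 + x1 * x3 * x4) :
    0 ≤ cubicC1Mix q x0 x1 x2 x3 x4 := by
  have key : x1 ^ 4 * x2 ^ 4 * x3 ^ 3 * x4 * cubicC1Mix q x0 x1 x2 x3 x4 =
      cubicCertificate q (1 - q) x0 x1 x2 x3 x4 (x1 ^ 2 - x0 * x2)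
        (x1 * x2 ^ 2 - 2 * x1 ^ 2 * x3 + x0 * x2 * x3)
        (x2 * x3 ^ 2 - 2 * x2 ^ 2 * x4 + x1 * x3 * x4) := by
    unfold cubicC1Mix cubicCertificate
    ring
  refine nonneg_of_mul_nonneg_right ?_ (by positivity : 0 < x1 ^ 4 * x2 ^ 4 * x3 ^ 3 * x4)
  rw [key]
  exact cubicCertificate_nonneg hq0 (by linarith) h0 h1.le h2.le h3.le h4.le (sub_nonneg.2 hU) hV1 hV2

theorem cubicC1Mix_left_zero_nonneg (hq1 : q ≤ 1) (h2 : 0 < x2)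
    (hV2 : 0 ≤ x2 * x3 ^ 2 - 2 * x2 ^ 2 * x4) :
    0 ≤ cubicC1Mix q 0 0 x2 x3 x4 := by
  have hr : 0 ≤ 1 - q := by linarith
  have hA : 0 ≤ x3 ^ 2 - 2 * x2 * x4 := nonneg_of_mul_nonneg_right (by linarith) h2
  have key : cubicC1Mix q 0 0 x2 x3 x4 =
      (1 - q) * x2 * ((1 - q) ^ 2 * (x3 ^ 2 - 2 * x2 * x4) + q ^ 2 * x2 ^ 2) := by
    unfold cubicC1Mix
    ring
  rw [key]
  positivity

theorem cubicC1Mix_right_zero_nonneg (hq0 : 0 ≤ q) (hq1 : q ≤ 1) (h1 : 0 < x1)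
    (h2 : 0 < x2) (h3 : 0 < x3) (hU : x0 * x2 ≤ x1 ^ 2) (hN : x1 * x3 ≤ x2 ^ 2)
    (hV1 : 0 ≤ x1 * x2 ^ 2 - 2 * x1 ^ 2 * x3 + x0 * x2 * x3) :
    0 ≤ cubicC1Mix q x0 x1 x2 x3 0 := by
  have hr : 0 ≤ 1 - q := by linarith
  have hU' := sub_nonneg.2 hU
  have hN' := sub_nonneg.2 hN
  have key : x1 * x2 * cubicC1Mix q x0 x1 x2 x3 0 =
      q ^ 2 * (1 - q) * (x1 ^ 2 - x0 * x2) * (x2 ^ 2 - x1 * x3) * x3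
        + q ^ 2 * (x1 * x2 ^ 2 - 2 * x1 ^ 2 * x3 + x0 * x2 * x3) * ((1 - q) * x2 + q * x1) * x2
        + (1 - q) * ((1 - q) * x2 + q * x1) ^ 2 * x1 * x3 ^ 2 := by
    unfold cubicC1Mix
    ring
  refine nonneg_of_mul_nonneg_right ?_ (mul_pos h1 h2)
  rw [key]
  positivity

theorem cubicC1Mix_nonneg (hq0 : 0 ≤ q) (hq1 : q ≤ 1) (h0 : 0 ≤ x0) (h1 : 0 ≤ x1)
    (h2 : 0 < x2) (h3 : 0 < x3) (h4 : 0 ≤ x4) (h01 : x1 = 0 → x0 = 0)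
    (hU : x0 * x2 ≤ x1 ^ 2) (hN : x1 * x3 ≤ x2 ^ 2)
    (hV1 : 0 ≤ x1 * x2 ^ 2 - 2 * x1 ^ 2 * x3 + x0 * x2 * x3)
    (hV2 : 0 ≤ x2 * x3 ^ 2 - 2 * x2 ^ 2 * x4 + x1 * x3 * x4) :
    0 ≤ cubicC1Mix q x0 x1 x2 x3 x4 := by
  obtain rfl | h1 := h1.eq_or_lt
  · obtain rfl := h01 rfl
    exact cubicC1Mix_left_zero_nonneg hq1 h2 (by simpa using hV2)
  obtain rfl | h4 := h4.eq_or_lt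
  · exact cubicC1Mix_right_zero_nonneg hq0 hq1 h1 h2 h3 hU hN hV1
  exact cubicC1Mix_nonneg_of_pos hq0 hq1 h0 h1 h2 h3 h4 hU hV1 hV2

end cubicC1Mix

theorem exists_pos_of_bernoulliMix_ne_zero {h : ℤ → ℝ} (hh : ∀ k, 0 ≤ h k) {q : ℝ} {k : ℤ}
    (hk : bernoulliMix q h k ≠ 0) : ∃ i, k - 1 ≤ i ∧ i ≤ k ∧ 0 < h i := by
  by_contra! hcon
  apply hk
  rw [bernoulliMix, le_antisymm (hcon k (by omega) le_rfl) (hh k),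
    le_antisymm (hcon (k - 1) le_rfl (by omega)) (hh (k - 1))]
  ring

theorem cubicC1_bernoulliMix_nonneg {h : ℤ → ℝ} (hh : IsPF2 h) (hc : ∀ k, 0 ≤ cubicC1 h k)
    {q : ℝ} (hq0 : 0 ≤ q) (hq1 : q ≤ 1) (k : ℤ) : 0 ≤ cubicC1 (bernoulliMix q h) k := by
  by_cases hz : bernoulliMix q h (k - 1) = 0 ∨ bernoulliMix q h (k + 1) = 0
  · exact cubicC1_nonneg_of_eq_zero (hh.bernoulliMix hq0 hq1).nonneg hz
  rw [not_or] at hz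
  obtain ⟨i, -, hi, hpi⟩ := exists_pos_of_bernoulliMix_ne_zero hh.nonneg hz.1
  obtain ⟨j, hj, -, hpj⟩ := exists_pos_of_bernoulliMix_ne_zero hh.nonneg hz.2
  have h2 : 0 < h (k - 1) := hh.pos_of_le_of_le hi (by omega) hpi hpj
  have h3 : 0 < h k := hh.pos_of_le_of_le (by omega) (by omega) hpi hpj
  have h01 : h (k - 2) = 0 → h (k - 3) = 0 := fun h1 => by
    by_contra h0
    have h1_pos := hh.pos_of_le_of_le (by omega : k - 3 ≤ k - 2) (by omega : k - 2 ≤ k - 1)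
      ((hh.nonneg _).lt_of_ne' h0) h2
    exact h1_pos.ne' h1
  have hU := hh.mul_le_sq (k - 2)
  have hN := hh.mul_le_sq (k - 1)
  have hV1 := hc (k - 1)
  have hV2 := hc k
  simp only [cubicC1, sub_sub, sub_add_cancel, show k - 2 + 1 = k - 1 by ring] at hU hN hV1 hV2
  norm_num at hU hN hV1 hV2
  rw [cubicC1_bernoulliMix]
  exact cubicC1Mix_nonneg hq0 hq1 (hh.nonneg _) (hh.nonneg _) h2 h3 (hh.nonneg _) h01 hU hN hV1 hV2

theorem isPF2_bernoulliSumPMF_and_cubicC1_nonneg (I : Finset ℕ) (p : ℕ → ℝ)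
    (hp : ∀ i ∈ I, 0 ≤ p i ∧ p i ≤ 1) :
    IsPF2 (bernoulliSumPMF I p) ∧ ∀ k, 0 ≤ cubicC1 (bernoulliSumPMF I p) k := by
  induction I using Finset.induction_on with
  | empty =>
    have e : bernoulliSumPMF ∅ p = fun k => if k = 0 then 1 else 0 :=
      funext (bernoulliSumPMF_empty p)
    rw [e]
    exact ⟨isPF2_indicator_zero, fun k => by
      simp only [cubicC1]; split_ifs <;> first | omega | norm_num⟩
  | insert j I hj ih =>
    obtain ⟨hpj0, hpj1⟩ := hp j (mem_insert_self j I)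
    obtain ⟨hpf, hc⟩ := ih fun i hi => hp i (mem_insert_of_mem hi)
    rw [bernoulliSumPMF_insert_s2 hj]
    exact ⟨hpf.bernoulliMix hpj0 hpj1, cubicC1_bernoulliMix_nonneg hpf hc hpj0 hpj1⟩

theorem bernoulli_sum_cubic_C1 (m : ℕ) (p : ℕ → ℝ)
    (hp : ∀ i ∈ Finset.range m, 0 ≤ p i ∧ p i ≤ 1)
    (g : ℤ → ℝ) (hg : ∀ k, g k = bernoulliSumPMF (Finset.range m) p k) (k : ℤ) :
    0 ≤ g (k - 1) * g k ^ 2 - 2 * g (k - 1) ^ 2 * g (k + 1) + g (k - 2) * g k * g (k + 1) := by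
  obtain rfl : g = bernoulliSumPMF (range m) p := funext hg
  exact (isPF2_bernoulliSumPMF_and_cubicC1_nonneg (range m) p hp).2 k
end

section
/- Let g be the probability mass function of a sum of m independent Bernoulli random variables. Then for every integer k: 2·g_k³ − 3·g_{k-1}·g_k·g_{k+1} + g_{k-1}²·g_{k+2} ≥ 0. -/
/-!
Each factor `1 - p + p X` of the generating polynomial `∏ i, (1 - p i + p i X)` acts on coefficient
sequences by `g ↦ (1 - p) g + p g(· - 1)`. The target cubic satisfies
`g k * C3 k = 2 (g k ^ 2 - g (k-1) g (k+1)) ^ 2 + g (k-1) V (k+1)` with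
`V k = g (k-1) ^ 2 g k - 2 g (k-2) g k ^ 2 + g (k-2) g (k-1) g (k+1)`,
so it suffices that `g ≥ 0` and `V ≥ 0` (if `g k = 0` the cubic is plainly nonnegative).
Each factor preserves these together with the nonnegativity of the minors of the matrix
`(g (i + j))` with rows `y ≤ w` and columns `0 ≤ s`, and with rows `z ≤ y ≤ x` and columns
`0, 1, 2`: every such quantity becomes a combination, with coefficients `(1 - p) ^ a * p ^ b`, of
the same quantities for `g`, except that `V` also produces two mixed cubics `W₁`, `W₂`; these are
handled like `C3`, by an identity for `g j * W` in terms of the invariants. All invariants hold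
for the point mass at `0`, the empty sum.
-/

open Finset

namespace BernoulliSum

def bernoulliConv (q r : ℝ) (g : ℤ → ℝ) (k : ℤ) : ℝ := q * g k + r * g (k - 1)

lemma bernoulliSumPMF_empty (p : ℕ → ℝ) :
    bernoulliSumPMF ∅ p = fun k => if k = 0 then 1 else 0 := by
  ext k
  unfold bernoulliSumPMF
  rcases lt_trichotomy k 0 with hk | rfl | hk
  · simp [hk.ne, hk.not_ge]
  · simp
  · rw [if_pos hk.le, if_neg hk.ne', powersetCard_eq_empty.mpr (by simpa using hk), sum_empty]

lemma sum_powersetCard_succ_insert {I : Finset ℕ} {a : ℕ} (ha : a ∉ I) (p : ℕ → ℝ) (n : ℕ) :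
    ∑ S ∈ (insert a I).powersetCard (n + 1),
        (∏ i ∈ S, p i) * ∏ i ∈ insert a I \ S, (1 - p i) =
      (1 - p a) * ∑ S ∈ I.powersetCard (n + 1), (∏ i ∈ S, p i) * ∏ i ∈ I \ S, (1 - p i)
        + p a * ∑ S ∈ I.powersetCard n, (∏ i ∈ S, p i) * ∏ i ∈ I \ S, (1 - p i) := by
  have notMem_of_mem {m : ℕ} {S : Finset ℕ} (hS : S ∈ I.powersetCard m) : a ∉ S :=
    fun h => ha ((mem_powersetCard.mp hS).1 h)
  have hdisj : Disjoint (I.powersetCard (n + 1)) ((I.powersetCard n).image (insert a)) := by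
    refine disjoint_left.mpr fun S hS hS' => ?_
    obtain ⟨T, -, rfl⟩ := mem_image.mp hS'
    exact notMem_of_mem hS (mem_insert_self a T)
  have hinj : Set.InjOn (insert a) (I.powersetCard n : Set (Finset ℕ)) := fun S hS T hT hST => by
    rw [← erase_insert (notMem_of_mem hS), ← erase_insert (notMem_of_mem hT), hST]
  rw [powersetCard_succ_insert ha, sum_union hdisj, sum_image hinj, mul_sum, mul_sum]
  congr 1 <;> refine sum_congr rfl fun S hS => ?_
  · rw [insert_sdiff_of_notMem _ (notMem_of_mem hS), prod_insert (by simp [ha])]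
    ring
  · rw [insert_sdiff_insert, sdiff_insert_of_notMem ha, prod_insert (notMem_of_mem hS)]
    ring

lemma bernoulliSumPMF_insert {I : Finset ℕ} {a : ℕ} (ha : a ∉ I) (p : ℕ → ℝ) :
    bernoulliSumPMF (insert a I) p = bernoulliConv (1 - p a) (p a) (bernoulliSumPMF I p) := by
  ext k
  simp only [bernoulliConv]
  unfold bernoulliSumPMF
  rcases lt_trichotomy k 0 with hk | rfl | hk
  · rw [if_neg (by omega), if_neg (by omega), if_neg (by omega)]
    ring
  · simp [prod_insert ha]
  · obtain ⟨n, rfl⟩ : ∃ n : ℕ, k = n + 1 := ⟨(k - 1).toNat, by omega⟩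
    simp only [show (0 : ℤ) ≤ n + 1 by omega, if_true, add_sub_cancel_right, Int.toNat_natCast,
      show ((n : ℤ) + 1).toNat = n + 1 by omega]
    exact sum_powersetCard_succ_insert ha p n

def minor₂ (g : ℤ → ℝ) (w y s : ℤ) : ℝ := !![g w, g (w + s); g y, g (y + s)].det

def minor₃ (g : ℤ → ℝ) (x y z : ℤ) : ℝ :=
  !![g x, g (x + 1), g (x + 2); g y, g (y + 1), g (y + 2); g z, g (z + 1), g (z + 2)].det

lemma minor₃_eq (g : ℤ → ℝ) (x y z : ℤ) :
    minor₃ g x y z =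
      g x * (g (y + 1) * g (z + 2) - g (y + 2) * g (z + 1))
        - g (x + 1) * (g y * g (z + 2) - g (y + 2) * g z)
        + g (x + 2) * (g y * g (z + 1) - g (y + 1) * g z) := by
  simp only [minor₃, Matrix.det_fin_three, Fin.isValue, Matrix.of_apply, Matrix.cons_val',
    Matrix.cons_val_zero, Matrix.cons_val_fin_one, Matrix.cons_val_one, Matrix.cons_val]
  ring

def cubicV (g : ℤ → ℝ) (k : ℤ) : ℝ :=
  g (k - 1) ^ 2 * g k - 2 * g (k - 2) * g k ^ 2 + g (k - 2) * g (k - 1) * g (k + 1)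

def cubicW₁ (g : ℤ → ℝ) (k : ℤ) : ℝ :=
  g (k - 1) ^ 3 - g (k - 2) * g (k - 1) * g k - 2 * g (k - 3) * g k ^ 2
    + g (k - 2) ^ 2 * g (k + 1) + g (k - 3) * g (k - 1) * g (k + 1)

def cubicW₂ (g : ℤ → ℝ) (k : ℤ) : ℝ :=
  2 * g (k - 2) ^ 2 * g k - 3 * g (k - 3) * g (k - 1) * g k + g (k - 3) * g (k - 2) * g (k + 1)

def cubicC3 (g : ℤ → ℝ) (k : ℤ) : ℝ :=
  2 * g k ^ 3 - 3 * g (k - 1) * g k * g (k + 1) + g (k - 1) ^ 2 * g (k + 2)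

lemma minor₂_bernoulliConv (q r : ℝ) (g : ℤ → ℝ) (w y s : ℤ) :
    minor₂ (bernoulliConv q r g) w y s =
      q ^ 2 * minor₂ g w y s
        + q * r * (minor₂ g w y (s - 1) + minor₂ g (w - 1) (y - 1) (s + 1))
        + r ^ 2 * minor₂ g (w - 1) (y - 1) s := by
  simp only [minor₂, bernoulliConv, Matrix.det_fin_two_of]
  ring_nf

lemma minor₃_bernoulliConv (q r : ℝ) (g : ℤ → ℝ) (x y z : ℤ) :
    minor₃ (bernoulliConv q r g) x y z =
      q ^ 3 * minor₃ g x y z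
        + q ^ 2 * r * (minor₃ g (x - 1) y z + minor₃ g x (y - 1) z + minor₃ g x y (z - 1))
        + q * r ^ 2 * (minor₃ g (x - 1) (y - 1) z + minor₃ g (x - 1) y (z - 1)
          + minor₃ g x (y - 1) (z - 1))
        + r ^ 3 * minor₃ g (x - 1) (y - 1) (z - 1) := by
  simp only [minor₃_eq, bernoulliConv]
  ring_nf

lemma cubicV_bernoulliConv (q r : ℝ) (g : ℤ → ℝ) (k : ℤ) :
    cubicV (bernoulliConv q r g) k =
      q ^ 3 * cubicV g k + q ^ 2 * r * cubicW₁ g k + q * r ^ 2 * cubicW₂ g k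
        + r ^ 3 * cubicV g (k - 1) := by
  simp only [cubicV, cubicW₁, cubicW₂, bernoulliConv]
  ring_nf

lemma mul_cubicW₁ (g : ℤ → ℝ) (k : ℤ) :
    g (k - 2) * cubicW₁ g k =
      2 * g (k - 3) * cubicV g k + g (k - 2) * minor₃ g (k - 1) (k - 2) (k - 3)
        + g k * cubicV g (k - 1) := by
  simp only [cubicW₁, cubicV, minor₃_eq]
  ring_nf

lemma mul_cubicW₂ (g : ℤ → ℝ) (k : ℤ) :
    g (k - 1) * cubicW₂ g k = g (k - 3) * cubicV g k + 2 * g k * cubicV g (k - 1) := by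
  simp only [cubicW₂, cubicV]
  ring_nf

lemma mul_cubicC3 (g : ℤ → ℝ) (k : ℤ) :
    g k * cubicC3 g k =
      2 * (g k ^ 2 - g (k - 1) * g (k + 1)) ^ 2 + g (k - 1) * cubicV g (k + 1) := by
  simp only [cubicC3, cubicV]
  ring_nf

structure CubicInvariants (g : ℤ → ℝ) : Prop where
  nonneg : ∀ k, 0 ≤ g k
  minor₂_nonneg : ∀ w y s, y ≤ w → 0 ≤ s → 0 ≤ minor₂ g w y s
  minor₃_nonneg : ∀ x y z, z ≤ y → y ≤ x → 0 ≤ minor₃ g x y z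
  cubicV_nonneg : ∀ k, 0 ≤ cubicV g k

namespace CubicInvariants

variable {g : ℤ → ℝ}

lemma mul_eq_zero_of_apply_eq_zero (h : CubicInvariants g) {i j l : ℤ} (hij : i ≤ j)
    (hjl : j ≤ l) (hj : g j = 0) : g i * g l = 0 := by
  have hminor := h.minor₂_nonneg j i (l - j) hij (sub_nonneg.mpr hjl)
  rw [minor₂, Matrix.det_fin_two_of, hj, add_sub_cancel] at hminor
  exact le_antisymm (by linarith) (mul_nonneg (h.nonneg i) (h.nonneg l))

lemma cubicW₁_nonneg (h : CubicInvariants g) (k : ℤ) : 0 ≤ cubicW₁ g k := by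
  rcases (h.nonneg (k - 2)).eq_or_lt with hzero | hpos
  · have h31 : g (k - 3) * g (k - 1) = 0 :=
      h.mul_eq_zero_of_apply_eq_zero (by omega) (by omega) hzero.symm
    have h30 : g (k - 3) * g k = 0 :=
      h.mul_eq_zero_of_apply_eq_zero (by omega) (by omega) hzero.symm
    have hW : cubicW₁ g k = g (k - 1) ^ 3 := by
      simp only [cubicW₁, ← hzero]
      linear_combination (-2 * g k) * h30 + g (k + 1) * h31
    exact hW ▸ pow_nonneg (h.nonneg _) 3
  · refine nonneg_of_mul_nonneg_right ?_ hpos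
    rw [mul_cubicW₁]
    have := h.minor₃_nonneg (k - 1) (k - 2) (k - 3) (by omega) (by omega)
    have := h.nonneg (k - 3); have := h.nonneg k
    have := h.cubicV_nonneg k; have := h.cubicV_nonneg (k - 1)
    positivity

lemma cubicW₂_nonneg (h : CubicInvariants g) (k : ℤ) : 0 ≤ cubicW₂ g k := by
  rcases (h.nonneg (k - 1)).eq_or_lt with hzero | hpos
  · have hW : cubicW₂ g k = 2 * g (k - 2) ^ 2 * g k + g (k - 3) * g (k - 2) * g (k + 1) := by
      simp only [cubicW₂, ← hzero]
      ring
    have := h.nonneg (k - 3); have := h.nonneg (k - 2); have := h.nonneg k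
    have := h.nonneg (k + 1)
    rw [hW]
    positivity
  · refine nonneg_of_mul_nonneg_right ?_ hpos
    rw [mul_cubicW₂]
    have := h.nonneg (k - 3); have := h.nonneg k
    have := h.cubicV_nonneg k; have := h.cubicV_nonneg (k - 1)
    positivity

lemma cubicC3_nonneg (h : CubicInvariants g) (k : ℤ) : 0 ≤ cubicC3 g k := by
  rcases (h.nonneg k).eq_or_lt with hzero | hpos
  · have hC : cubicC3 g k = g (k - 1) ^ 2 * g (k + 2) := by
      simp only [cubicC3, ← hzero]
      ring
    exact hC ▸ mul_nonneg (sq_nonneg _) (h.nonneg _)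
  · refine nonneg_of_mul_nonneg_right ?_ hpos
    rw [mul_cubicC3]
    have := h.nonneg (k - 1); have := h.cubicV_nonneg (k + 1)
    positivity

lemma bernoulliConv (h : CubicInvariants g) {q r : ℝ} (hq : 0 ≤ q) (hr : 0 ≤ r) :
    CubicInvariants (bernoulliConv q r g) where
  nonneg k := add_nonneg (mul_nonneg hq (h.nonneg k)) (mul_nonneg hr (h.nonneg (k - 1)))
  minor₂_nonneg w y s hyw hs := by
    rcases hs.eq_or_lt with rfl | hs
    · simp [minor₂]
    rw [minor₂_bernoulliConv]
    have := h.minor₂_nonneg w y s hyw hs.le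
    have := h.minor₂_nonneg w y (s - 1) hyw (by omega)
    have := h.minor₂_nonneg (w - 1) (y - 1) (s + 1) (by omega) (by omega)
    have := h.minor₂_nonneg (w - 1) (y - 1) s (by omega) hs.le
    positivity
  minor₃_nonneg x y z hzy hyx := by
    rcases hyx.eq_or_lt with rfl | hyx
    · exact (Matrix.det_zero_of_row_eq (i := 0) (j := 1) (by decide) rfl).ge
    rcases hzy.eq_or_lt with rfl | hzy
    · exact (Matrix.det_zero_of_row_eq (i := 1) (j := 2) (by decide) rfl).ge
    rw [minor₃_bernoulliConv]
    have := h.minor₃_nonneg x y z hzy.le hyx.le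
    have := h.minor₃_nonneg (x - 1) y z hzy.le (by omega)
    have := h.minor₃_nonneg x (y - 1) z (by omega) (by omega)
    have := h.minor₃_nonneg x y (z - 1) (by omega) hyx.le
    have := h.minor₃_nonneg (x - 1) (y - 1) z (by omega) (by omega)
    have := h.minor₃_nonneg (x - 1) y (z - 1) (by omega) (by omega)
    have := h.minor₃_nonneg x (y - 1) (z - 1) (by omega) (by omega)
    have := h.minor₃_nonneg (x - 1) (y - 1) (z - 1) (by omega) (by omega)
    positivity
  cubicV_nonneg k := by
    rw [cubicV_bernoulliConv]
    have := h.cubicV_nonneg k; have := h.cubicW₁_nonneg k; have := h.cubicW₂_nonneg k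
    have := h.cubicV_nonneg (k - 1)
    positivity

end CubicInvariants

lemma cubicInvariants_delta : CubicInvariants fun k => if k = 0 then 1 else 0 where
  nonneg k := by positivity
  minor₂_nonneg w y s hyw hs := by
    simp only [minor₂, Matrix.det_fin_two_of]
    split_ifs <;> first | omega | norm_num
  minor₃_nonneg x y z hzy hyx := by
    simp only [minor₃_eq]
    split_ifs <;> first | omega | norm_num
  cubicV_nonneg k := by
    simp only [cubicV]
    split_ifs <;> first | omega | norm_num

theorem cubicInvariants_bernoulliSumPMF {p : ℕ → ℝ} (I : Finset ℕ)
    (hp : ∀ i ∈ I, 0 ≤ p i ∧ p i ≤ 1) : CubicInvariants (bernoulliSumPMF I p) := by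
  induction I using Finset.induction_on with
  | empty => exact bernoulliSumPMF_empty p ▸ cubicInvariants_delta
  | insert a I ha ih =>
    obtain ⟨hpa₀, hpa₁⟩ := hp a (mem_insert_self a I)
    rw [bernoulliSumPMF_insert ha]
    exact (ih fun i hi => hp i (mem_insert_of_mem hi)).bernoulliConv (sub_nonneg.mpr hpa₁) hpa₀

end BernoulliSum

theorem bernoulli_sum_cubic_C3 (m : ℕ) (p : ℕ → ℝ)
    (hp : ∀ i ∈ Finset.range m, 0 ≤ p i ∧ p i ≤ 1)
    (g : ℤ → ℝ) (hg : ∀ k, g k = bernoulliSumPMF (Finset.range m) p k) (k : ℤ) :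
    0 ≤ 2 * g k ^ 3 - 3 * g (k - 1) * g k * g (k + 1) + g (k - 1) ^ 2 * g (k + 2) := by
  obtain rfl : g = bernoulliSumPMF (Finset.range m) p := funext hg
  exact (BernoulliSum.cubicInvariants_bernoulliSumPMF _ hp).cubicC3_nonneg k
end

section
/- Suppose f is a positive probability mass function on {0,...,n}, α_0 = 0 ≤ α_1 ≤ ... ≤ α_n = 1 with α_k ∈ [0,1], g_k = α_{k+1}f_{k+1} + (1−α_k)f_k, and the GLC condition α_{k+1}(1−α_{k+1})f_{k+1}² ≥ α_{k+2}(1−α_k)f_k f_{k+2} holds. Then for all k = 0,...,n-2 (with all relevant quantities positive): f_k·g_{k+1} ≤ f_{k+1}·g_k and f_{k+2}·g_k ≤ f_{k+1}·g_{k+1}. -/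
/-!
Write `a, b, c = α_k, α_{k+1}, α_{k+2}` and `x, y, z = f_k, f_{k+1}, f_{k+2}`. Multiplying the
first inequality by `1 - a` and the second by `c`, each follows from GLC together with
`a ≤ b ≤ c` and `0 ≤ b ≤ 1`. So it suffices that `α_k < 1` for `k < n` and `0 < α_k` for `k ≥ 1`:
where `α_{i+1}` is `0` or `1` the right side of GLC vanishes, which forces `α_{i+2} = 0` or
`α_i = 1`, and by monotonicity either degeneracy propagates to an endpoint and contradicts
`α_0 = 0` or `α_n = 1`.
-/

lemma glc_score_ineq_fst {a b c x y z : ℝ} (hb : 0 ≤ b) (hab : a ≤ b) (ha : a < 1)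
    (hxy : 0 ≤ x * y) (hglc : c * (1 - a) * x * z ≤ b * (1 - b) * y ^ 2) :
    x * (c * z + (1 - b) * y) ≤ y * (b * y + (1 - a) * x) := by
  refine le_of_mul_le_mul_left ?_ (sub_pos.2 ha)
  nlinarith [mul_nonneg hb (sub_nonneg.2 hab), mul_nonneg (sub_nonneg.2 ha.le) (sub_nonneg.2 hab),
    sq_nonneg y]

lemma glc_score_ineq_snd {a b c x y z : ℝ} (hc : 0 < c) (hbc : b ≤ c) (hb : b ≤ 1)
    (hyz : 0 ≤ y * z) (hglc : c * (1 - a) * x * z ≤ b * (1 - b) * y ^ 2) :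
    z * (b * y + (1 - a) * x) ≤ y * (c * z + (1 - b) * y) := by
  refine le_of_mul_le_mul_left ?_ hc
  nlinarith [mul_nonneg hc.le (sub_nonneg.2 hbc), mul_nonneg (sub_nonneg.2 hbc) (sub_nonneg.2 hb),
    sq_nonneg y]

lemma glc_mul_eq_zero {a b c x y z : ℝ} (hx : 0 < x) (hz : 0 < z) (hc : 0 ≤ c) (ha : a ≤ 1)
    (hb : b * (1 - b) = 0) (hglc : c * (1 - a) * x * z ≤ b * (1 - b) * y ^ 2) :
    c * (1 - a) = 0 := by
  rw [hb, zero_mul, mul_assoc] at hglc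
  exact le_antisymm (nonpos_of_mul_nonpos_left hglc (mul_pos hx hz))
    (mul_nonneg hc (sub_nonneg.2 ha))

section GLC

variable {n : ℕ} {f α : ℕ → ℝ}

lemma lt_one_of_glc (hfpos : ∀ k ≤ n, 0 < f k) (hα0 : α 0 = 0)
    (hαmem : ∀ k ≤ n, 0 ≤ α k ∧ α k ≤ 1) (hαmono : ∀ k, k + 1 ≤ n → α k ≤ α (k + 1))
    (hglc : ∀ k, k + 2 ≤ n →
      α (k + 2) * (1 - α k) * f k * f (k + 2) ≤ α (k + 1) * (1 - α (k + 1)) * f (k + 1) ^ 2) :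
    ∀ k < n, α k < 1 := by
  intro k hk
  induction k with
  | zero => rw [hα0]; exact one_pos
  | succ i ih =>
    by_contra! hge
    have h_one : α (i + 1) = 1 := le_antisymm (hαmem (i + 1) hk.le).2 hge
    have h_next : 1 ≤ α (i + 2) := h_one ▸ hαmono (i + 1) hk
    have h_zero := glc_mul_eq_zero (hfpos i (by omega)) (hfpos (i + 2) hk) (by linarith)
      (hαmem i (by omega)).2 (by rw [h_one, sub_self, mul_zero]) (hglc i hk)
    have := ih (by omega)
    rcases mul_eq_zero.1 h_zero with h | h <;> linarith

lemma pos_of_glc (hfpos : ∀ k ≤ n, 0 < f k) (hαn : α n = 1)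
    (hαmem : ∀ k ≤ n, 0 ≤ α k ∧ α k ≤ 1) (hαmono : ∀ k, k + 1 ≤ n → α k ≤ α (k + 1))
    (hglc : ∀ k, k + 2 ≤ n →
      α (k + 2) * (1 - α k) * f k * f (k + 2) ≤ α (k + 1) * (1 - α (k + 1)) * f (k + 1) ^ 2) :
    ∀ k, 1 ≤ k → k ≤ n → 0 < α k := by
  intro k hk1 hkn
  induction hkn using Nat.decreasingInduction with
  | self => rw [hαn]; exact one_pos
  | of_succ k hk ih =>
    obtain ⟨i, rfl⟩ : ∃ i, k = i + 1 := ⟨k - 1, by omega⟩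
    by_contra! hle
    have h_zero : α (i + 1) = 0 := le_antisymm hle (hαmem (i + 1) hk.le).1
    have h_prev : α i = 0 :=
      le_antisymm (h_zero ▸ hαmono i (by omega)) (hαmem i (by omega)).1
    have := glc_mul_eq_zero (hfpos i (by omega)) (hfpos (i + 2) hk) (hαmem (i + 2) hk).1
      (hαmem i (by omega)).2 (by rw [h_zero, zero_mul]) (hglc i hk)
    rw [h_prev, sub_zero, mul_one] at this
    linarith [ih (by omega)]

end GLC

theorem glc_kmon_score_ineqs_general (n : ℕ) (f g α : ℕ → ℝ)
    (hfpos : ∀ k ≤ n, 0 < f k)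
    (hα0 : α 0 = 0) (hαn : α n = 1)
    (hαmem : ∀ k ≤ n, 0 ≤ α k ∧ α k ≤ 1)
    (hαmono : ∀ k, k + 1 ≤ n → α k ≤ α (k + 1))
    (hg : ∀ k, k + 1 ≤ n → g k = α (k + 1) * f (k + 1) + (1 - α k) * f k)
    (hglc : ∀ k, k + 2 ≤ n →
      α (k + 2) * (1 - α k) * f k * f (k + 2) ≤ α (k + 1) * (1 - α (k + 1)) * f (k + 1) ^ 2) :
    ∀ k, k + 2 ≤ n →
      f k * g (k + 1) ≤ f (k + 1) * g k ∧ f (k + 2) * g k ≤ f (k + 1) * g (k + 1) := by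
  intro k hk
  have hy := hfpos (k + 1) (by omega)
  rw [hg k (by omega), hg (k + 1) hk]
  exact ⟨glc_score_ineq_fst (hαmem (k + 1) (by omega)).1 (hαmono k (by omega))
      (lt_one_of_glc hfpos hα0 hαmem hαmono hglc k (by omega))
      (mul_pos (hfpos k (by omega)) hy).le (hglc k hk),
    glc_score_ineq_snd (pos_of_glc hfpos hαn hαmem hαmono hglc (k + 2) (by omega) hk)
      (hαmono (k + 1) hk) (hαmem (k + 1) (by omega)).2
      (mul_pos hy (hfpos (k + 2) hk)).le (hglc k hk)⟩

theorem glc_kmon_score_ineqs (n : ℕ) (f g α : ℕ → ℝ)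
    (hfpos : ∀ k ≤ n, 0 < f k)
    (hfsum : ∑ k ∈ Finset.range (n + 1), f k = 1)
    (hα0 : α 0 = 0) (hαn : α n = 1)
    (hαmem : ∀ k ≤ n, 0 ≤ α k ∧ α k ≤ 1)
    (hαmono : ∀ k, k + 1 ≤ n → α k ≤ α (k + 1))
    (hg : ∀ k, k + 1 ≤ n → g k = α (k + 1) * f (k + 1) + (1 - α k) * f k)
    (hglc : ∀ k, k + 2 ≤ n →
      α (k + 2) * (1 - α k) * f k * f (k + 2) ≤ α (k + 1) * (1 - α (k + 1)) * f (k + 1) ^ 2) :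
    ∀ k, k + 2 ≤ n →
      f k * g (k + 1) ≤ f (k + 1) * g k ∧ f (k + 2) * g k ≤ f (k + 1) * g (k + 1) :=
  glc_kmon_score_ineqs_general n f g α hfpos hα0 hαn hαmem hαmono hg hglc
end

section
/- Suppose 0 < a := (f_k·g_{k+1})/(f_{k+1}·g_k) ≤ 1 and 0 < b := (f_{k+2}·g_k)/(f_{k+1}·g_{k+1}) ≤ 1 for positive reals f_k, f_{k+1}, f_{k+2}, g_k, g_{k+1}. Then −log(f_k·f_{k+2}/f_{k+1}²) ≤ (f_{k+1}² − f_k·f_{k+2})/(2·f_{k+1}·g_k·g_{k+1}) · (g_k²/f_k + g_{k+1}²/f_{k+2}). -/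
lemma key_log_bound (t : ℝ) (ht : 0 < t) (ht1 : t ≤ 1) :
    -Real.log t ≤ (1 - t ^ 2) / (2 * t) := by
  have hlog : Real.log t ≤ 0 := Real.log_nonpos ht.le ht1
  have hsinh : (1 - t ^ 2) / (2 * t) = Real.sinh (-Real.log t) := by
    rw [Real.sinh_eq]
    rw [neg_neg, Real.exp_neg, Real.exp_log ht]
    field_simp
  rw [hsinh]
  exact Real.self_le_sinh_iff.mpr (by linarith)

theorem log_ratio_bound (fk fk1 fk2 gk gk1 : ℝ)
    (hfk : 0 < fk) (hfk1 : 0 < fk1) (hfk2 : 0 < fk2)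
    (hgk : 0 < gk) (hgk1 : 0 < gk1)
    (h1 : fk * gk1 ≤ fk1 * gk) (h2 : fk2 * gk ≤ fk1 * gk1) :
    -Real.log (fk * fk2 / fk1 ^ 2) ≤
      (fk1 ^ 2 - fk * fk2) / (2 * fk1 * gk * gk1) * (gk ^ 2 / fk + gk1 ^ 2 / fk2) := by
  set a := fk * gk1 / (fk1 * gk) with ha_def
  set b := fk2 * gk / (fk1 * gk1) with hb_def
  have ha0 : 0 < a := div_pos (by positivity) (by positivity)
  have hb0 : 0 < b := div_pos (by positivity) (by positivity)
  have ha1 : a ≤ 1 := (div_le_one (by positivity)).mpr h1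
  have hb1 : b ≤ 1 := (div_le_one (by positivity)).mpr h2
  have hab : fk * fk2 / fk1 ^ 2 = a * b := by
    rw [ha_def, hb_def]; field_simp
  have hlog : Real.log (fk * fk2 / fk1 ^ 2) = Real.log a + Real.log b := by
    rw [hab, Real.log_mul ha0.ne' hb0.ne']
  have hrhs : (fk1 ^ 2 - fk * fk2) / (2 * fk1 * gk * gk1) * (gk ^ 2 / fk + gk1 ^ 2 / fk2)
      = (1 - a ^ 2) / (2 * a) + (1 - b ^ 2) / (2 * b) := by
    rw [ha_def, hb_def]; field_simp; ring
  rw [hlog, hrhs]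
  have h3 := key_log_bound a ha0 ha1
  have h4 := key_log_bound b hb0 hb1
  linarith
end
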